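/- Let k ≥ 1 and let (π_j, μ_j, σ_j)_{j=1}^k and (π'_j, μ'_j, σ'_j)_{j=1}^k be two parameter lists with all π_j > 0, all π'_j > 0, Σ_j π_j = Σ_j π'_j = 1, all σ_j, σ'_j > 0, the pairs (μ_j,σ_j) pairwise distinct, and the pairs (μ'_j,σ'_j) pairwise distinct. If Σ_{j=1}^k π_j·φ(x;μ_j,σ_j) = Σ_{j=1}^k π'_j·φ(x;μ'_j,σ'_j) for every x ∈ ℝ, then there exists a permutation τ of {1,…,k} such that π'_j = π_{τ(j)}, μ'_j = μ_{τ(j)} and σ'_j = σ_{τ(j)} for every j. -/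

import Mathlib

/-- Gaussian density with mean `μ` and standard deviation `σ`. -/
noncomputable def gaussDensity (x μ σ : ℝ) : ℝ :=
  (Real.sqrt (2 * Real.pi))⁻¹ * σ⁻¹ * Real.exp (-(x - μ) ^ 2 / (2 * σ ^ 2))


open Filter Topology

lemma gauss_pos (x μ σ : ℝ) (hσ : 0 < σ) : 0 < gaussDensity x μ σ := by
  unfold gaussDensity
  have := Real.pi_pos
  positivity

lemma gauss_ratio_eq (x μ σ m s : ℝ) (hσ : 0 < σ) (hs : 0 < s) :
    gaussDensity x μ σ * (gaussDensity x m s)⁻¹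
      = (s / σ) * Real.exp ((1/(2*s^2) - 1/(2*σ^2)) * x^2
          + (μ/σ^2 - m/s^2) * x + (m^2/(2*s^2) - μ^2/(2*σ^2))) := by
  have hC : Real.sqrt (2 * Real.pi) ≠ 0 :=
    ne_of_gt (Real.sqrt_pos.mpr (by positivity))
  have h1 : gaussDensity x μ σ * (gaussDensity x m s)⁻¹
      = (s / σ) * (Real.exp (-(x - μ) ^ 2 / (2 * σ ^ 2))
          * (Real.exp (-(x - m) ^ 2 / (2 * s ^ 2)))⁻¹) := by
    unfold gaussDensity
    field_simp
  rw [h1, ← Real.exp_neg, ← Real.exp_add]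
  congr 1
  field_simp
  ring

lemma gauss_ratio_tendsto (μ σ m s : ℝ) (hσ : 0 < σ) (hs : 0 < s)
    (h : σ < s ∨ (σ = s ∧ μ < m)) :
    Tendsto (fun x => gaussDensity x μ σ * (gaussDensity x m s)⁻¹) atTop (nhds 0) := by
  set a : ℝ := 1/(2*s^2) - 1/(2*σ^2) with ha
  set b : ℝ := μ/σ^2 - m/s^2 with hb
  set c : ℝ := m^2/(2*s^2) - μ^2/(2*σ^2) with hc
  have hE : Tendsto (fun x : ℝ => a * x^2 + b * x + c) atTop atBot := by
    rcases h with hlt | ⟨heqs, hμ⟩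
    · have hane : a < 0 := by
        rw [ha]
        have : (1:ℝ)/(2*s^2) < 1/(2*σ^2) := by
          apply div_lt_div_of_pos_left one_pos (by positivity)
          nlinarith
        linarith
      have h1 : Tendsto (fun x : ℝ => a * x + b) atTop atBot := by
        apply tendsto_atBot_add_const_right
        exact (tendsto_const_mul_atBot_of_neg hane).mpr tendsto_id
      have h2 : Tendsto (fun x : ℝ => (a * x + b) * x) atTop atBot :=
        h1.atBot_mul_atTop₀ tendsto_id
      have h3 := tendsto_atBot_add_const_right atTop c h2
      refine h3.congr (fun x => by ring)
    · have hbne : b < 0 := by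
        rw [hb, heqs]
        have : μ/s^2 < m/s^2 := by
          apply div_lt_div_of_pos_right hμ (by positivity)
        linarith
      have h1 : Tendsto (fun x : ℝ => b * x + c) atTop atBot := by
        apply tendsto_atBot_add_const_right
        exact (tendsto_const_mul_atBot_of_neg hbne).mpr tendsto_id
      have ha0 : a = 0 := by rw [ha, heqs]; ring
      refine h1.congr (fun x => by rw [ha0]; ring)
  have := (Real.tendsto_exp_atBot.comp hE).const_mul (s / σ)
  simp only [mul_zero] at this
  exact Tendsto.congr (fun x => (gauss_ratio_eq x μ σ m s hσ hs).symm) this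

lemma gauss_lin_indep_pairs (S : Finset (ℝ × ℝ)) (c : ℝ × ℝ → ℝ)
    (hS : ∀ p ∈ S, 0 < p.2)
    (h : ∀ x, ∑ p ∈ S, c p * gaussDensity x p.1 p.2 = 0) :
    ∀ p ∈ S, c p = 0 := by
  by_contra hc
  push_neg at hc
  obtain ⟨p0, hp0S, hp0⟩ := hc
  set T : Finset (ℝ × ℝ) := S.filter (fun p => c p ≠ 0) with hT
  have hTne : T.Nonempty := ⟨p0, Finset.mem_filter.mpr ⟨hp0S, hp0⟩⟩
  obtain ⟨q, hqT, hqmax⟩ := T.exists_max_image (fun p => toLex (p.2, p.1)) hTne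
  have hqS : q ∈ S := (Finset.mem_filter.mp hqT).1
  have hqc : c q ≠ 0 := (Finset.mem_filter.mp hqT).2
  have hq2 : 0 < q.2 := hS q hqS
  -- each term's limit
  set L : ℝ × ℝ → ℝ := fun p => if p = q then c q else 0 with hL
  have hterm : ∀ p ∈ S, Tendsto
      (fun x => c p * (gaussDensity x p.1 p.2 * (gaussDensity x q.1 q.2)⁻¹))
      atTop (nhds (L p)) := by
    intro p hpS
    by_cases hpq : p = q
    · subst hpq
      have : ∀ x : ℝ, c p * (gaussDensity x p.1 p.2 * (gaussDensity x p.1 p.2)⁻¹) = c p := by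
        intro x
        rw [mul_inv_cancel₀ (ne_of_gt (gauss_pos x p.1 p.2 hq2)), mul_one]
      simp only [hL, if_pos rfl]
      exact Tendsto.congr (fun x => (this x).symm) tendsto_const_nhds
    · simp only [hL, if_neg hpq]
      by_cases hcp : c p = 0
      · simpa [hcp] using (tendsto_const_nhds : Tendsto (fun _ : ℝ => (0:ℝ)) atTop (nhds 0))
      · have hpT : p ∈ T := Finset.mem_filter.mpr ⟨hpS, hcp⟩
        have hle := hqmax p hpT
        have hlt : toLex (p.2, p.1) < toLex (q.2, q.1) := by
          rcases lt_or_eq_of_le hle with h' | h'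
          · exact h'
          · exfalso
            apply hpq
            have := congrArg ofLex h'
            simp only [ofLex_toLex] at this
            exact Prod.ext (congrArg Prod.snd this) (congrArg Prod.fst this)
        rw [Prod.Lex.lt_iff] at hlt
        have := gauss_ratio_tendsto p.1 p.2 q.1 q.2 (hS p hpS) hq2 hlt
        simpa using this.const_mul (c p)
  have hsumT : Tendsto (fun x => ∑ p ∈ S,
      c p * (gaussDensity x p.1 p.2 * (gaussDensity x q.1 q.2)⁻¹)) atTop
      (nhds (∑ p ∈ S, L p)) := tendsto_finset_sum S hterm
  have hLsum : ∑ p ∈ S, L p = c q := by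
    rw [hL]
    rw [Finset.sum_ite_eq' S q (fun _ => c q)]
    simp [hqS]
  have hzero : ∀ x : ℝ, ∑ p ∈ S,
      c p * (gaussDensity x p.1 p.2 * (gaussDensity x q.1 q.2)⁻¹) = 0 := by
    intro x
    have : ∑ p ∈ S, c p * (gaussDensity x p.1 p.2 * (gaussDensity x q.1 q.2)⁻¹)
        = (∑ p ∈ S, c p * gaussDensity x p.1 p.2) * (gaussDensity x q.1 q.2)⁻¹ := by
      rw [Finset.sum_mul]
      exact Finset.sum_congr rfl (fun p _ => by ring)
    rw [this, h x, zero_mul]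
  have : c q = 0 := by
    rw [← hLsum]
    exact tendsto_nhds_unique hsumT
      (Tendsto.congr (fun x => (hzero x).symm) tendsto_const_nhds) |>.symm ▸ rfl
  exact hqc this

/-- Identifiability of finite Gaussian mixtures modulo permutation of components:
if two mixtures with strictly positive weights summing to one, positive standard
deviations, and pairwise-distinct component pairs agree as functions on ℝ, then the
parameter lists coincide up to a permutation. -/
theorem gaussian_mixture_identifiable (k : ℕ) (hk : 1 ≤ k)
    (w μ σ w' μ' σ' : Fin k → ℝ)
    (hw : ∀ j, 0 < w j) (hw' : ∀ j, 0 < w' j)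
    (hsum : ∑ j, w j = 1) (hsum' : ∑ j, w' j = 1)
    (hσ : ∀ j, 0 < σ j) (hσ' : ∀ j, 0 < σ' j)
    (hdist : Function.Injective (fun j => (μ j, σ j)))
    (hdist' : Function.Injective (fun j => (μ' j, σ' j)))
    (heq : ∀ x : ℝ, ∑ j, w j * gaussDensity x (μ j) (σ j)
      = ∑ j, w' j * gaussDensity x (μ' j) (σ' j)) :
    ∃ τ : Equiv.Perm (Fin k), ∀ j, w' j = w (τ j) ∧ μ' j = μ (τ j) ∧ σ' j = σ (τ j) := by
  classical
  set pair : Fin k → ℝ × ℝ := fun i => (μ i, σ i) with hpair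
  set pair' : Fin k → ℝ × ℝ := fun j => (μ' j, σ' j) with hpair'
  set S : Finset (ℝ × ℝ) :=
    (Finset.image pair Finset.univ) ∪ (Finset.image pair' Finset.univ) with hSdef
  set A : ℝ × ℝ → ℝ := fun p => ∑ i ∈ Finset.univ.filter (fun i => pair i = p), w i with hA
  set B : ℝ × ℝ → ℝ := fun p => ∑ j ∈ Finset.univ.filter (fun j => pair' j = p), w' j with hB
  have hS2 : ∀ p ∈ S, 0 < p.2 := by
    intro p hp
    rcases Finset.mem_union.mp hp with h | h <;>
      · obtain ⟨i, _, rfl⟩ := Finset.mem_image.mp h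
        first | exact hσ i | exact hσ' i
  have hmaps : ∀ i ∈ (Finset.univ : Finset (Fin k)), pair i ∈ S := fun i _ =>
    Finset.mem_union_left _ (Finset.mem_image_of_mem _ (Finset.mem_univ i))
  have hmaps' : ∀ j ∈ (Finset.univ : Finset (Fin k)), pair' j ∈ S := fun j _ =>
    Finset.mem_union_right _ (Finset.mem_image_of_mem _ (Finset.mem_univ j))
  have hzero : ∀ x : ℝ, ∑ p ∈ S, (A p - B p) * gaussDensity x p.1 p.2 = 0 := by
    intro x
    have hAx : ∑ p ∈ S, A p * gaussDensity x p.1 p.2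
        = ∑ i, w i * gaussDensity x (μ i) (σ i) := by
      rw [← Finset.sum_fiberwise_of_maps_to hmaps (fun i => w i * gaussDensity x (μ i) (σ i))]
      refine Finset.sum_congr rfl (fun p hp => ?_)
      rw [hA, Finset.sum_mul]
      refine Finset.sum_congr rfl (fun i hi => ?_)
      have : pair i = p := (Finset.mem_filter.mp hi).2
      rw [← this]
    have hBx : ∑ p ∈ S, B p * gaussDensity x p.1 p.2
        = ∑ j, w' j * gaussDensity x (μ' j) (σ' j) := by
      rw [← Finset.sum_fiberwise_of_maps_to hmaps' (fun j => w' j * gaussDensity x (μ' j) (σ' j))]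
      refine Finset.sum_congr rfl (fun p hp => ?_)
      rw [hB, Finset.sum_mul]
      refine Finset.sum_congr rfl (fun j hj => ?_)
      have : pair' j = p := (Finset.mem_filter.mp hj).2
      rw [← this]
    have : ∑ p ∈ S, (A p - B p) * gaussDensity x p.1 p.2
        = ∑ p ∈ S, A p * gaussDensity x p.1 p.2 - ∑ p ∈ S, B p * gaussDensity x p.1 p.2 := by
      rw [← Finset.sum_sub_distrib]
      exact Finset.sum_congr rfl (fun p _ => by ring)
    rw [this, hAx, hBx, heq x, sub_self]
  have hcoef : ∀ p ∈ S, A p - B p = 0 :=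
    gauss_lin_indep_pairs S (fun p => A p - B p) hS2 hzero
  -- fibers are singletons
  have hfib : ∀ i : Fin k, Finset.univ.filter (fun i' => pair i' = pair i) = {i} := by
    intro i
    ext i'
    simp only [Finset.mem_filter, Finset.mem_univ, true_and, Finset.mem_singleton]
    exact ⟨fun h => hdist h, fun h => by rw [h]⟩
  have hfib' : ∀ j : Fin k, Finset.univ.filter (fun j' => pair' j' = pair' j) = {j} := by
    intro j
    ext j'
    simp only [Finset.mem_filter, Finset.mem_univ, true_and, Finset.mem_singleton]
    exact ⟨fun h => hdist' h, fun h => by rw [h]⟩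
  -- for each j, find i with pair i = pair' j and w i = w' j
  have hex : ∀ j : Fin k, ∃ i : Fin k, pair i = pair' j ∧ w i = w' j := by
    intro j
    have hc := hcoef (pair' j) (hmaps' j (Finset.mem_univ j))
    have hBj : B (pair' j) = w' j := by
      show (∑ j' ∈ Finset.univ.filter (fun j' => pair' j' = pair' j), w' j') = w' j
      rw [hfib' j, Finset.sum_singleton]
    have hAj : A (pair' j) = w' j := by
      have := sub_eq_zero.mp hc
      rw [this, hBj]
    have hAne : A (pair' j) ≠ 0 := by rw [hAj]; exact ne_of_gt (hw' j)
    have hAne2 : (∑ i ∈ Finset.univ.filter (fun i => pair i = pair' j), w i) ≠ 0 := hAne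
    obtain ⟨i, hi, _⟩ := Finset.exists_ne_zero_of_sum_ne_zero hAne2
    have hpi : pair i = pair' j := (Finset.mem_filter.mp hi).2
    refine ⟨i, hpi, ?_⟩
    have : A (pair' j) = w i := by
      show (∑ i' ∈ Finset.univ.filter (fun i' => pair i' = pair' j), w i') = w i
      rw [← hpi, hfib i, Finset.sum_singleton]
    rw [← this, hAj]
  choose f hf1 hf2 using hex
  have hfinj : Function.Injective f := by
    intro j1 j2 hj
    apply hdist'
    have : pair' j1 = pair' j2 := by rw [← hf1 j1, ← hf1 j2, hj]
    exact this
  have hfbij : Function.Bijective f := Finite.injective_iff_bijective.mp hfinj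
  refine ⟨Equiv.ofBijective f hfbij, fun j => ?_⟩
  have h1 := hf1 j
  have h2 := hf2 j
  simp only [hpair, hpair'] at h1
  refine ⟨h2.symm, ?_, ?_⟩
  · exact (congrArg Prod.fst h1).symm
  · exact (congrArg Prod.snd h1).symm
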